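/- The infinite symmetric group S∞ = Sym(ℕ) has uncountable strong cofinality: whenever Sym(ℕ) = ⋃ₘ Aₘ for an increasing chain of subsets A₀ ⊆ A₁ ⊆ ..., there exist m and k such that every permutation of ℕ is a product of k elements of Aₘ. -/

import Mathlib

/-!
Bergman's argument, on `ℤ × ℤ × ℕ` with rows `{i} × ℤ × ℕ` cut into blocks `{i} × {j} × ℕ`. After
replacing `Aₘ` by `Aₘ ∩ Aₘ⁻¹`, a diagonal argument gives one `Aₘ` realising every permutation of one
fixed row. Every permutation acting blockwise on that row and trivially elsewhere is the commutator
of such an element with the block shift of the row: it suffices that the block permutations realised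
telescope. Partitions into countably many infinite pieces are all conjugate, so every permutation
preserving such a partition is a product of two conjugates of these blockwise permutations. Finally
every `g` is `p * (p⁻¹ * g)` with both factors sending infinitely many points of each row into each
row (`p` is built on a Baire-generic set splitting every row and every `g`-image of a row), and such
a permutation matches the row transitions of the shear `(i, j, n) ↦ (i + j, j, n)` after a
row-preserving relabelling, hence is a product row · column · row.
Counting letters, `k = 2 · 3 · 2 · (1 + 4 + 1) = 72`.
-/

open Pointwise Equiv Set Filter Topology
open scoped commutatorElement

def HasUncountableStrongCofinality (G : Type*) [Group G] : Prop :=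
  ∀ A : ℕ → Set G, Monotone A → ⋃ m, A m = univ → ∃ m k, A m ^ k = univ

theorem HasUncountableStrongCofinality.of_mulEquiv {G H : Type*} [Group G] [Group H]
    (hG : HasUncountableStrongCofinality G) (e : G ≃* H) : HasUncountableStrongCofinality H := by
  intro A hA hcov
  obtain ⟨m, k, hmk⟩ := hG (fun m => e ⁻¹' A m) (fun _ _ h => preimage_mono (hA h))
    (by rw [← preimage_iUnion, hcov, preimage_univ])
  refine ⟨m, k, ?_⟩
  rw [← image_preimage_eq (A m) e.surjective, ← image_pow, hmk,
    image_univ_of_surjective e.surjective]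

theorem Monotone.eventually_mem {G : Type*} {A : ℕ → Set G} (hA : Monotone A)
    (hcov : ⋃ m, A m = univ) (g : G) : ∀ᶠ m in atTop, g ∈ A m := by
  obtain ⟨m, hm⟩ := mem_iUnion.1 (hcov.symm ▸ mem_univ g)
  exact eventually_atTop.2 ⟨m, fun n hn => hA hn hm⟩

theorem hasUncountableStrongCofinality_of_symmetric {G : Type*} [Group G]
    (h : ∀ B : ℕ → Set G, Monotone B → (∀ g, ∀ᶠ m in atTop, g ∈ B m) →
      (∀ m g, g ∈ B m → g⁻¹ ∈ B m) → ∃ m k, univ ⊆ B m ^ k) :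
    HasUncountableStrongCofinality G := by
  intro A hA hcov
  obtain ⟨m, k, hmk⟩ := h (fun m => A m ∩ (A m)⁻¹)
    (fun _ _ hmn => inter_subset_inter (hA hmn) (inv_subset_inv.2 (hA hmn)))
    (fun g => (hA.eventually_mem hcov g).and (by simpa using hA.eventually_mem hcov g⁻¹))
    (fun _ _ hg => ⟨hg.2, by simpa using hg.1⟩)
  exact ⟨m, k, univ_subset_iff.1 (hmk.trans (pow_subset_pow_left inter_subset_left))⟩

theorem singleton_mul_mul_singleton_subset_pow {G : Type*} [Group G] {S X : Set G} {c : G} {n : ℕ}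
    (hc : c ∈ S) (hc' : c⁻¹ ∈ S) (hX : X ⊆ S ^ n) : {c} * X * {c⁻¹} ⊆ S ^ (n + 2) :=
  calc {c} * X * {c⁻¹} ⊆ S * S ^ n * S :=
        mul_subset_mul (mul_subset_mul (singleton_subset_iff.2 hc) hX) (singleton_subset_iff.2 hc')
    _ = S ^ (n + 2) := by rw [← pow_succ', ← pow_succ]

section Fibers

variable {α β ι κ : Type*}

def HasInfiniteFibers (φ : α → ι) : Prop := ∀ i, (φ ⁻¹' {i}).Infinite

def fiberPerms (φ : α → ι) : Set (Perm α) := {σ | ∀ x, φ (σ x) = φ x}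

def blockPerms (β : α → Option κ) : Set (Perm α) :=
  {σ | ∀ x, β (σ x) = β x ∧ (β x = none → σ x = x)}

theorem hasInfiniteFibers_fst [Infinite β] : HasInfiniteFibers (Prod.fst : ι × β → ι) := fun i =>
  infinite_of_injective_forall_mem (Prod.mk_right_injective i) fun _ => rfl

theorem hasInfiniteFibers_snd [Infinite ι] : HasInfiniteFibers (Prod.snd : ι × β → β) := fun b =>
  infinite_of_injective_forall_mem (Prod.mk_left_injective b) fun _ => rfl

theorem hasInfiniteFibers_restrict {φ : α → ι} {s : Set α} (h : ∀ i, (s ∩ φ ⁻¹' {i}).Infinite) :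
    HasInfiniteFibers fun x : s => φ x := fun i =>
  Infinite.of_image Subtype.val (s := Subtype.val ⁻¹' (φ ⁻¹' {i}))
    (by rw [Subtype.image_preimage_coe]; exact h i)

theorem HasInfiniteFibers.equiv_comp {φ : α → ι} (hφ : HasInfiniteFibers φ) (e : ι ≃ κ) :
    HasInfiniteFibers (e ∘ φ) := fun k =>
  (hφ (e.symm k)).mono fun x hx => by simp_all

theorem HasInfiniteFibers.comp_equiv {φ : α → ι} (hφ : HasInfiniteFibers φ) (e : β ≃ α) :
    HasInfiniteFibers (φ ∘ e) := fun i =>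
  (hφ i).preimage (e.surjective.range_eq ▸ subset_univ _)

theorem HasInfiniteFibers.getLeft? {φ : α → κ ⊕ β} (hφ : HasInfiniteFibers φ) [Nonempty β] :
    HasInfiniteFibers fun x => (φ x).getLeft? := by
  rintro (_ | k)
  · exact (hφ (.inr (Classical.arbitrary β))).mono fun x hx => by simp_all
  · exact (hφ (.inl k)).mono fun x hx => by simp_all

theorem HasInfiniteFibers.getRight? {φ : α → κ ⊕ β} (hφ : HasInfiniteFibers φ) [Nonempty κ] :
    HasInfiniteFibers fun x => (φ x).getRight? := by
  rintro (_ | b)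
  · exact (hφ (.inl (Classical.arbitrary κ))).mono fun x hx => by simp_all
  · exact (hφ (.inr b)).mono fun x hx => by simp_all

theorem exists_equiv_comp_eq [Countable α] [Countable β] {φ : α → ι} {ψ : β → ι}
    (hφ : HasInfiniteFibers φ) (hψ : HasInfiniteFibers ψ) : ∃ e : α ≃ β, ψ ∘ e = φ := by
  have fiberEquiv (i : ι) : Nonempty ({x // φ x = i} ≃ {y // ψ y = i}) :=
    have : Infinite {x // φ x = i} := (hφ i).to_subtype
    have : Infinite {y // ψ y = i} := (hψ i).to_subtype
    nonempty_equiv_of_countable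
  refine ⟨(sigmaFiberEquiv φ).symm.trans
    ((sigmaCongrRight fun i => (fiberEquiv i).some).trans (sigmaFiberEquiv ψ)), ?_⟩
  ext x
  exact ((fiberEquiv (φ x)).some ⟨x, rfl⟩).2

theorem conj_mem_blockPerms {β β' : α → Option κ} {c σ : Perm α} (hc : ∀ x, β (c x) = β' x)
    (hσ : σ ∈ blockPerms β) : c⁻¹ * σ * c ∈ blockPerms β' := by
  intro x
  have hcx := hc x
  refine ⟨?_, fun hx => ?_⟩
  · rw [← hc, Perm.mul_apply, Perm.mul_apply, ← Perm.mul_apply c, mul_inv_cancel, Perm.one_apply,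
      (hσ _).1, hcx]
  · rw [Perm.mul_apply, Perm.mul_apply, (hσ _).2 (hcx.trans hx), ← Perm.mul_apply, inv_mul_cancel,
      Perm.one_apply]

theorem exists_mul_eq_of_mem_fiberPerms_sum {φ : α → κ ⊕ β} {σ : Perm α}
    (hσ : σ ∈ fiberPerms φ) : ∃ σₗ ∈ blockPerms fun x => (φ x).getLeft?,
      ∃ σᵣ ∈ blockPerms fun x => (φ x).getRight?, σ = σₗ * σᵣ := by
  classical
  let p : α → Prop := fun x => (φ x).isLeft
  have hp (x) : p (σ x) ↔ p x := by simp only [p, hσ x]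
  have hnp (x) : ¬p (σ x) ↔ ¬p x := (hp x).not
  refine ⟨Perm.ofSubtype (σ.subtypePerm hp), fun x => ?_,
    Perm.ofSubtype (σ.subtypePerm (p := fun x => ¬p x) hnp), fun x => ?_, Equiv.ext fun x => ?_⟩ <;>
  by_cases hx : p x <;>
  simp [Perm.ofSubtype_apply_of_mem, Perm.ofSubtype_apply_of_not_mem, hx, hσ x, (hp x).not.2] <;>
  cases h : φ x <;> simp_all [p]

theorem exists_fiberPerms_subset_conj_mul_conj [Countable α] [Countable ι] [Infinite ι]
    [Countable κ] [Infinite κ] {φ : α → ι} {β : α → Option κ} (hφ : HasInfiniteFibers φ)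
    (hβ : HasInfiniteFibers β) : ∃ c c' : Perm α,
      fiberPerms φ ⊆ {c} * blockPerms β * {c⁻¹} * ({c'} * blockPerms β * {c'⁻¹}) := by
  obtain ⟨s⟩ : Nonempty (ι ≃ κ ⊕ κ) := nonempty_equiv_of_countable
  have hsφ := hφ.equiv_comp s
  obtain ⟨c, hc⟩ := exists_equiv_comp_eq hβ hsφ.getLeft?
  obtain ⟨c', hc'⟩ := exists_equiv_comp_eq hβ hsφ.getRight?
  refine ⟨c, c', fun σ hσ => ?_⟩
  have hsσ : σ ∈ fiberPerms (s ∘ φ) := fun x => by simp [hσ x]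
  obtain ⟨σₗ, hσₗ, σᵣ, hσᵣ, rfl⟩ := exists_mul_eq_of_mem_fiberPerms_sum hsσ
  have hl := conj_mem_blockPerms (congrFun hc) hσₗ
  have hr := conj_mem_blockPerms (congrFun hc') hσᵣ
  rw [show σₗ * σᵣ = c * (c⁻¹ * σₗ * c) * c⁻¹ * (c' * (c'⁻¹ * σᵣ * c') * c'⁻¹) by group]
  exact mul_mem_mul (mul_mem_mul (mul_mem_mul rfl hl) rfl) (mul_mem_mul (mul_mem_mul rfl hr) rfl)

end Fibers

section Splitting

variable {α ι : Type*}

theorem eventually_residual_infinite_inter [Countable α] {C : Set α} (hC : C.Infinite) (b : Bool) :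
    ∀ᶠ V in residual (α → Bool), (C ∩ {a | V a = b}).Infinite := by
  classical
  have hopen (t : Finset α) : IsOpen {V : α → Bool | ∃ a ∈ C, a ∉ t ∧ V a = b} := by
    have : {V : α → Bool | ∃ a ∈ C, a ∉ t ∧ V a = b} = ⋃ a ∈ C \ t, (fun V => V a) ⁻¹' {b} := by
      ext; simp [and_assoc]
    rw [this]
    exact isOpen_biUnion fun a _ => (isOpen_discrete {b}).preimage (continuous_apply a)
  have hdense (t : Finset α) : Dense {V : α → Bool | ∃ a ∈ C, a ∉ t ∧ V a = b} := by
    intro V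
    have hV : Tendsto (fun a => Function.update V a b) cofinite (𝓝 V) :=
      tendsto_pi_nhds.2 fun x => tendsto_nhds_of_eventually_eq <|
        (eventually_cofinite_ne x).mono fun a ha => Function.update_of_ne ha.symm b V
    refine mem_closure_iff_frequently.2 (hV.frequently ?_)
    refine (frequently_cofinite_iff_infinite.2 (hC.sdiff t.finite_toSet)).mono fun a ha => ?_
    exact ⟨a, ha.1, ha.2, Function.update_self a b V⟩
  filter_upwards [eventually_countable_forall.2 fun t =>
    residual_of_dense_open (hopen t) (hdense t)] with V hV hfin
  obtain ⟨a, ha, hat, hVa⟩ := hV hfin.toFinset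
  exact hat (hfin.mem_toFinset.2 ⟨ha, hVa⟩)

theorem exists_inter_infinite_and_diff_infinite [Countable α] [Countable ι] {C : ι → Set α}
    (hC : ∀ i, (C i).Infinite) : ∃ W : Set α, ∀ i, (C i ∩ W).Infinite ∧ (C i \ W).Infinite := by
  obtain ⟨V, hV⟩ := (dense_of_mem_residual (eventually_countable_forall.2 fun i =>
    (eventually_residual_infinite_inter (hC i) true).and
      (eventually_residual_infinite_inter (hC i) false))).nonempty
  refine ⟨{a | V a = true}, fun i => ⟨(hV i).1, ?_⟩⟩
  simpa [sdiff_eq, compl_ofPred] using (hV i).2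

end Splitting

section Mixing

variable {α β ι κ : Type*}

def mixingPerms (ρ : α → ι) : Set (Perm α) := {g | HasInfiniteFibers fun x => (ρ x, ρ (g x))}

theorem exists_equiv_hasInfiniteFibers_prod [Countable α] [Countable β] [Countable ι] [Nonempty ι]
    {φ : α → ι} {ψ : β → ι} (hφ : HasInfiniteFibers φ) (hψ : HasInfiniteFibers ψ) :
    ∃ e : α ≃ β, HasInfiniteFibers fun x => (φ x, ψ (e x)) := by
  obtain ⟨a, ha⟩ := exists_equiv_comp_eq hφ (hasInfiniteFibers_fst (β := ι × ℕ))
  obtain ⟨b, hb⟩ := exists_equiv_comp_eq hψ (hasInfiniteFibers_fst (β := ι × ℕ))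
  let swap : ι × ι × ℕ ≃ ι × ι × ℕ :=
    ⟨fun m => (m.2.1, m.1, m.2.2), fun m => (m.2.1, m.1, m.2.2), fun _ => rfl, fun _ => rfl⟩
  refine ⟨a.trans (swap.trans b.symm), fun ⟨i, j⟩ => ?_⟩
  refine infinite_of_injective_forall_mem (f := fun n => a.symm (i, j, n))
    (fun n n' h => by simpa using h) fun n => ?_
  simp [← congrFun ha, ← congrFun hb, swap]

theorem mixingPerms_subset_mul_mul [Countable α] {ρ : α → ι} {γ : α → κ} {k : Perm α}
    (hkγ : k ∈ fiberPerms γ) (hkρ : k ∈ mixingPerms ρ) :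
    mixingPerms ρ ⊆ fiberPerms ρ * fiberPerms γ * fiberPerms ρ := by
  intro g hg
  obtain ⟨r, hr⟩ := exists_equiv_comp_eq hg hkρ
  have hrow (x) : ρ (r x) = ρ x := congrArg Prod.fst (congrFun hr x)
  have htrans (x) : ρ (k (r x)) = ρ (g x) := congrArg Prod.snd (congrFun hr x)
  refine ⟨g * r⁻¹ * k⁻¹ * k, ⟨g * r⁻¹ * k⁻¹, fun y => ?_, k, hkγ, rfl⟩, r, hrow, by group⟩
  simpa using (htrans (r⁻¹ (k⁻¹ y))).symm

theorem univ_subset_mixingPerms_mul [Countable α] [Countable ι] [Nonempty ι] {ρ : α → ι}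
    (hρ : HasInfiniteFibers ρ) : (univ : Set (Perm α)) ⊆ mixingPerms ρ * mixingPerms ρ := by
  classical
  intro g _
  have hρg : HasInfiniteFibers fun x => ρ (g⁻¹ x) := hρ.comp_equiv g⁻¹
  obtain ⟨W, hW⟩ := exists_inter_infinite_and_diff_infinite (C := Sum.elim
    (fun i => ρ ⁻¹' {i}) fun i => (fun x => ρ (g⁻¹ x)) ⁻¹' {i}) (Sum.rec hρ hρg)
  have hin (i) : (W ∩ ρ ⁻¹' {i}).Infinite := inter_comm W _ ▸ (hW (.inl i)).1
  have hout (i) : (Wᶜ ∩ ρ ⁻¹' {i}).Infinite := by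
    simpa [Set.sdiff_eq, inter_comm] using (hW (.inl i)).2
  have hout' (i) : (Wᶜ ∩ (fun x => ρ (g⁻¹ x)) ⁻¹' {i}).Infinite := by
    simpa [Set.sdiff_eq, inter_comm] using (hW (.inr i)).2
  obtain ⟨q, hq⟩ := exists_equiv_hasInfiniteFibers_prod (hasInfiniteFibers_restrict hin)
    (hasInfiniteFibers_restrict hin)
  obtain ⟨q', hq'⟩ := exists_equiv_hasInfiniteFibers_prod (hasInfiniteFibers_restrict hout)
    (hasInfiniteFibers_restrict hout')
  -- `p` mixes the rows inside `W`, and sends the rows inside `Wᶜ` onto the `g`-images of rows.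
  let p : Perm α := Perm.subtypeCongr (p := (· ∈ W)) q q'
  refine ⟨p, fun ⟨i, j⟩ => ?_, p⁻¹ * g, fun ⟨i, j⟩ => ?_, mul_inv_cancel_left p g⟩
  · refine ((hq (i, j)).image Subtype.val_injective.injOn).mono ?_
    rintro _ ⟨z, hz, rfl⟩
    simpa [p, Perm.subtypeCongr.left_apply_subtype] using hz
  · refine ((hq' (j, i)).image (f := fun z => g⁻¹ (q' z))
      (g⁻¹.injective.comp (Subtype.val_injective.comp q'.injective)).injOn).mono ?_
    rintro _ ⟨z, hz, rfl⟩
    have hpz : p z = q' z := Perm.subtypeCongr.right_apply_subtype _ _ z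
    simp only [mem_preimage, mem_singleton_iff, Prod.mk.injEq] at hz ⊢
    exact ⟨hz.2, by simp [← hpz, hz.1]⟩

def shear (A Z : Type*) [AddGroup A] : Perm (A × A × Z) where
  toFun x := (x.1 + x.2.1, x.2)
  invFun x := (x.1 - x.2.1, x.2)
  left_inv _ := by simp
  right_inv _ := by simp

theorem shear_mem_fiberPerms_snd (A Z : Type*) [AddGroup A] :
    shear A Z ∈ fiberPerms Prod.snd := fun _ => rfl

theorem shear_mem_mixingPerms_fst (A Z : Type*) [AddGroup A] [Infinite Z] :
    shear A Z ∈ mixingPerms Prod.fst := fun ⟨i, j⟩ =>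
  infinite_of_injective_forall_mem (f := fun n : Z => (i, -i + j, n))
    (fun n n' h => by simpa using h) fun n => by simp [shear]

end Mixing

section Rows

variable {I Y Z G : Type*}

theorem exists_forall_exists_mem_apply_mk_eq [Countable I] [Infinite I]
    {B : ℕ → Set (Perm (I × Y))} (hB : ∀ g, ∃ m, g ∈ B m) :
    ∃ m i, ∀ h : Perm Y, ∃ u ∈ B m, ∀ y, u (i, y) = (i, h y) := by
  by_contra! hbad
  choose h hh using hbad
  obtain ⟨e⟩ : Nonempty (I ≃ ℕ) := nonempty_equiv_of_countable
  obtain ⟨m, hm⟩ := hB (prodCongrRight fun i => h (e i) i)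
  obtain ⟨y, hy⟩ := hh m (e.symm m) _ hm
  exact hy (by simp)

theorem exists_prodCongrRight_eq {σ : Perm (I × Y)} (h : ∀ x, (σ x).1 = x.1) :
    ∃ f : I → Perm Y, σ = prodCongrRight f := by
  have hσ (i y) : σ (i, y) = (i, (σ (i, y)).2) := Prod.ext (h _) rfl
  have hσ' (i y) : σ⁻¹ (i, y) = (i, (σ⁻¹ (i, y)).2) := by
    refine Prod.ext ?_ rfl
    simpa using (h (σ⁻¹ (i, y))).symm
  refine ⟨fun i => ⟨fun y => (σ (i, y)).2, fun y => (σ⁻¹ (i, y)).2, fun y => ?_, fun y => ?_⟩,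
    Equiv.ext fun ⟨i, y⟩ => hσ i y⟩
  · simp [← hσ]
  · show (σ (i, (σ⁻¹ (i, y)).2)).2 = y
    rw [← hσ']
    simp

theorem Equiv.Perm.inv_apply_mk {u : Perm (I × Y)} {i : I} {h : Perm Y}
    (hu : ∀ y, u (i, y) = (i, h y)) (y : Y) : u⁻¹ (i, y) = (i, h⁻¹ y) := by
  rw [Perm.inv_eq_iff_eq, hu]
  simp

theorem commutatorElement_prodExtendRight [DecidableEq I] {u : Perm (I × Y)} {i : I} {h : Perm Y}
    (hu : ∀ y, u (i, y) = (i, h y)) (s : Perm Y) :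
    ⁅u, Perm.prodExtendRight i s⁆ = Perm.prodExtendRight i ⁅h, s⁆ := by
  have hs := Perm.prodExtendRight_apply_eq i s
  refine Equiv.ext fun ⟨i', y⟩ => ?_
  simp only [commutatorElement_def, Perm.mul_apply]
  by_cases hi : i' = i
  · subst hi
    rw [Perm.inv_apply_mk hs, Perm.inv_apply_mk hu, hs, hu, Perm.prodExtendRight_apply_eq]
    rfl
  · have hsi : (Perm.prodExtendRight i s)⁻¹ (i', y) = (i', y) := by
      rw [Perm.inv_eq_iff_eq, Perm.prodExtendRight_apply_ne _ hi]
    have hx : (u⁻¹ (i', y)).1 ≠ i := fun hx => hi <| by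
      simpa [hu] using congrArg (fun x => (u x).1) (Prod.ext hx rfl : u⁻¹ (i', y) = (i, _))
    have hfix := Perm.prodExtendRight_apply_ne s hx (u⁻¹ (i', y)).2
    rw [Prod.mk.eta] at hfix
    rw [hsi, hfix, ← Perm.mul_apply, mul_inv_cancel, Perm.one_apply,
      Perm.prodExtendRight_apply_ne _ hi]

theorem exists_eq_mul_sub_one [Group G] (f : ℤ → G) : ∃ F : ℤ → G, ∀ j, F j = f j * F (j - 1) := by
  refine ⟨fun j => Int.inductionOn' j 0 (f 0) (fun k _ F => f (k + 1) * F) fun k _ F => (f k)⁻¹ * F,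
    fun j => ?_⟩
  dsimp only
  rcases le_or_gt j 0 with hj | hj
  · rw [Int.inductionOn'_sub_one hj, mul_inv_cancel_left]
  · obtain ⟨k, hk, rfl⟩ : ∃ k, 0 ≤ k ∧ j = k + 1 := ⟨j - 1, by omega, by omega⟩
    rw [Int.inductionOn'_add_one hk, add_sub_cancel_right]

def blockShift (Z : Type*) : Perm (ℤ × Z) := prodCongr (Equiv.addRight 1) (Equiv.refl Z)

theorem commutatorElement_prodCongrRight_blockShift {f F : ℤ → Perm Z}
    (hF : ∀ j, F j = f j * F (j - 1)) :
    ⁅(prodCongrRight F : Perm (ℤ × Z)), blockShift Z⁆ = prodCongrRight f := by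
  refine Equiv.ext fun ⟨j, n⟩ => ?_
  simp [commutatorElement_def, blockShift, hF j, ← sub_eq_add_neg]

def rowBlock [DecidableEq I] (i₀ : I) (x : I × ℤ × Z) : Option ℤ :=
  if x.1 = i₀ then some x.2.1 else none

theorem hasInfiniteFibers_rowBlock [DecidableEq I] [Nontrivial I] [Infinite Z] (i₀ : I) :
    HasInfiniteFibers (rowBlock (Z := Z) i₀) := by
  rintro (_ | j)
  · obtain ⟨i₁, hi₁⟩ := exists_ne i₀
    exact infinite_of_injective_forall_mem (f := fun y : ℤ × Z => (i₁, y))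
      (Prod.mk_right_injective i₁) fun _ => by simp [rowBlock, hi₁]
  · exact infinite_of_injective_forall_mem (f := fun n : Z => (i₀, j, n))
      (fun n n' h => by simpa using h) fun _ => by simp [rowBlock]

theorem exists_eq_prodExtendRight_of_mem_blockPerms [DecidableEq I] {i₀ : I}
    {σ : Perm (I × ℤ × Z)} (hσ : σ ∈ blockPerms (rowBlock i₀)) :
    ∃ f : ℤ → Perm Z, σ = Perm.prodExtendRight i₀ (prodCongrRight f) := by
  have hrow (x : I × ℤ × Z) : (σ x).1 = x.1 := by
    by_cases hx : x.1 = i₀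
    · have := (hσ x).1
      simp only [rowBlock, hx, if_true] at this
      split_ifs at this with h
      exact h.trans hx.symm
    · rw [(hσ x).2 (by simp [rowBlock, hx])]
  obtain ⟨g, rfl⟩ := exists_prodCongrRight_eq hrow
  have hblock (y : ℤ × Z) : (g i₀ y).1 = y.1 := by
    simpa [rowBlock] using (hσ (i₀, y)).1
  obtain ⟨f, hf⟩ := exists_prodCongrRight_eq hblock
  refine ⟨f, Equiv.ext fun ⟨i, y⟩ => ?_⟩
  by_cases hi : i = i₀
  · subst hi
    simp [hf]
  · rw [Perm.prodExtendRight_apply_ne _ hi]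
    exact (hσ (i, y)).2 (by simp [rowBlock, hi])

theorem blockPerms_rowBlock_subset_pow [DecidableEq I] {i₀ : I} {S : Set (Perm (I × ℤ × Z))}
    (hS : ∀ h : Perm (ℤ × Z), ∃ u ∈ S, u⁻¹ ∈ S ∧ ∀ y, u (i₀, y) = (i₀, h y))
    (ht : Perm.prodExtendRight i₀ (blockShift Z) ∈ S)
    (ht' : (Perm.prodExtendRight i₀ (blockShift Z))⁻¹ ∈ S) :
    blockPerms (rowBlock i₀) ⊆ S ^ 4 := by
  intro σ hσ
  obtain ⟨f, rfl⟩ := exists_eq_prodExtendRight_of_mem_blockPerms hσ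
  obtain ⟨F, hF⟩ := exists_eq_mul_sub_one f
  obtain ⟨u, hu, hu', huF⟩ := hS (prodCongrRight F)
  rw [← commutatorElement_prodCongrRight_blockShift hF, ← commutatorElement_prodExtendRight huF,
    commutatorElement_def, pow_succ, pow_succ, pow_succ, pow_one]
  exact mul_mem_mul (mul_mem_mul (mul_mem_mul hu ht) hu') ht'

end Rows

theorem univ_subset_fiberPerms_fst_mul_snd_mul_fst_pow_two :
    (univ : Set (Perm (ℤ × ℤ × ℕ))) ⊆
      (fiberPerms Prod.fst * fiberPerms Prod.snd * fiberPerms Prod.fst) ^ 2 := by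
  have hmix := mixingPerms_subset_mul_mul (shear_mem_fiberPerms_snd ℤ ℕ)
    (shear_mem_mixingPerms_fst ℤ ℕ)
  rw [sq]
  exact (univ_subset_mixingPerms_mul hasInfiniteFibers_fst).trans (mul_subset_mul hmix hmix)

theorem hasUncountableStrongCofinality_perm_int_int_nat :
    HasUncountableStrongCofinality (Perm (ℤ × ℤ × ℕ)) := by
  refine hasUncountableStrongCofinality_of_symmetric fun B hBmono hB hBinv => ?_
  obtain ⟨m₀, i₀, hrow⟩ := exists_forall_exists_mem_apply_mk_eq fun g => (hB g).exists
  have hβ := hasInfiniteFibers_rowBlock (Z := ℕ) i₀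
  obtain ⟨c₁, c₁', hc₁⟩ := exists_fiberPerms_subset_conj_mul_conj hasInfiniteFibers_fst hβ
  obtain ⟨c₂, c₂', hc₂⟩ := exists_fiberPerms_subset_conj_mul_conj hasInfiniteFibers_snd hβ
  obtain ⟨m, hm₀, ht, h₁, h₁', h₂, h₂'⟩ := ((eventually_ge_atTop m₀).and <|
    (hB (Perm.prodExtendRight i₀ (blockShift ℕ))).and <| (hB c₁).and <| (hB c₁').and <|
      (hB c₂).and (hB c₂')).exists
  have hH : blockPerms (rowBlock i₀) ⊆ B m ^ 4 := by
    refine blockPerms_rowBlock_subset_pow (fun h => ?_) ht (hBinv _ _ ht)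
    obtain ⟨u, hu, hux⟩ := hrow h
    exact ⟨u, hBmono hm₀ hu, hBinv _ _ (hBmono hm₀ hu), hux⟩
  have hconj {c c'} (hc : c ∈ B m) (hc' : c' ∈ B m) :
      {c} * blockPerms (rowBlock i₀) * {c⁻¹} * ({c'} * blockPerms (rowBlock i₀) * {c'⁻¹}) ⊆
        B m ^ 12 :=
    (mul_subset_mul (singleton_mul_mul_singleton_subset_pow hc (hBinv _ _ hc) hH)
      (singleton_mul_mul_singleton_subset_pow hc' (hBinv _ _ hc') hH)).trans_eq
        (pow_add _ _ _).symm
  refine ⟨m, 72, univ_subset_fiberPerms_fst_mul_snd_mul_fst_pow_two.trans ?_⟩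
  calc (fiberPerms Prod.fst * fiberPerms Prod.snd * fiberPerms Prod.fst) ^ 2
      ⊆ (B m ^ 12 * B m ^ 12 * B m ^ 12) ^ 2 := by
        gcongr
        exacts [hc₁.trans (hconj h₁ h₁'), hc₂.trans (hconj h₂ h₂'), hc₁.trans (hconj h₁ h₁')]
    _ = B m ^ 72 := by rw [← pow_add, ← pow_add, ← pow_mul]

/-- Bergman's theorem: `Sym(ℕ)` has uncountable strong
cofinality: for every increasing exhaustion `Sym(ℕ) = ⋃ₘ Aₘ` there are `m, k`
with `Aₘᵏ = Sym(ℕ)`. -/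
theorem symNat_uncountable_strong_cofinality :
    ∀ A : ℕ → Set (Equiv.Perm ℕ), Monotone A → (⋃ m, A m) = Set.univ →
      ∃ m k, A m ^ k = (Set.univ : Set (Equiv.Perm ℕ)) := by
  obtain ⟨e⟩ : Nonempty (ℤ × ℤ × ℕ ≃ ℕ) := nonempty_equiv_of_countable
  exact hasUncountableStrongCofinality_perm_int_int_nat.of_mulEquiv (permCongrHom e)
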